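/- If M is a strongly generalized Eulerian graded A_n(K)-module and f ∈ R is a homogeneous polynomial, then the localization M_f is a strongly generalized Eulerian graded A_n(K)-module. -/

import Mathlib

/-!
Since `f` is homogeneous of degree `d`, `E_n f = f (E_n + d)`. Hence if `f^k y = ι z` with `z`
homogeneous of degree `i`, then `(E_n - (i - k d))^a` kills `y`: every homogeneous `y ∈ M_f` is
killed by `(E_n - b)^a` for some integer `b`, and the point is to show `b = |y|`. This is not
immediate, because the gradings are by additive subgroups only, so scalars need not preserve
them and `f^k y` need not be homogeneous.

Generalized eigenspaces of `E_n` for distinct eigenvalues meet trivially, so `b` depends only on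
the degree of `y ≠ 0`. If `d > 0`, some `X_l y` is nonzero (otherwise `f y = 0`), and `X_l` raises
degree and eigenvalue by one; climbing from `y` and from `ι z ≠ 0` (whose eigenvalue is its
degree) to a common degree gives `b = |y|`. If `d = 0`, `f` is a nonzero scalar, so `y ∈ ι(M)`
and `y` is the image of the degree `|y|` component of any preimage.
-/

open FreeAlgebra

inductive WeylGen (n : ℕ) : Type
  | x : Fin n → WeylGen n
  | d : Fin n → WeylGen n

inductive WeylRel (K : Type) [Field K] (n : ℕ) :
    FreeAlgebra K (WeylGen n) → FreeAlgebra K (WeylGen n) → Prop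
  | xx (i j : Fin n) : WeylRel K n (ι K (WeylGen.x i) * ι K (WeylGen.x j))
      (ι K (WeylGen.x j) * ι K (WeylGen.x i))
  | dd (i j : Fin n) : WeylRel K n (ι K (WeylGen.d i) * ι K (WeylGen.d j))
      (ι K (WeylGen.d j) * ι K (WeylGen.d i))
  | dx_ne (i j : Fin n) (h : i ≠ j) : WeylRel K n (ι K (WeylGen.d i) * ι K (WeylGen.x j))
      (ι K (WeylGen.x j) * ι K (WeylGen.d i))
  | dx (i : Fin n) : WeylRel K n (ι K (WeylGen.d i) * ι K (WeylGen.x i))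
      (1 + ι K (WeylGen.x i) * ι K (WeylGen.d i))

/-- The `n`-th Weyl algebra `A_n(K)`. -/
abbrev WeylAlgebra (K : Type) [Field K] (n : ℕ) := RingQuot (WeylRel K n)

variable (K : Type) [Field K] (n : ℕ)

/-- The generator `X i`. -/
noncomputable def Wx (i : Fin n) : WeylAlgebra K n :=
  RingQuot.mkAlgHom K (WeylRel K n) (ι K (WeylGen.x i))

/-- The generator `∂ i`. -/
noncomputable def Wd (i : Fin n) : WeylAlgebra K n :=
  RingQuot.mkAlgHom K (WeylRel K n) (ι K (WeylGen.d i))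

/-- The Euler operator `E_n = ∑ X_i ∂_i`. -/
noncomputable def euler : WeylAlgebra K n := ∑ i : Fin n, Wx K n i * Wd K n i

/-- The monomial `X^γ ∂^α`. -/
noncomputable def Wmonomial (γ α : Fin n → ℕ) : WeylAlgebra K n :=
  (List.ofFn fun i => Wx K n i ^ γ i).prod * (List.ofFn fun i => Wd K n i ^ α i).prod

/-- `g` is a grading making `M` a graded module over the graded Weyl algebra
(`deg X_i = 1`, `deg ∂_i = -1`): `M` is the internal direct sum of the subgroups `g j` and
the generators act with degrees `1` and `-1`. -/
def IsGradedWeylModule (M : Type) [AddCommGroup M] [Module (WeylAlgebra K n) M]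
    (g : ℤ → AddSubgroup M) : Prop :=
  DirectSum.IsInternal g ∧
    (∀ (i : Fin n) (j : ℤ), ∀ m ∈ g j, Wx K n i • m ∈ g (j + 1)) ∧
    (∀ (i : Fin n) (j : ℤ), ∀ m ∈ g j, Wd K n i • m ∈ g (j - 1))

/-- A graded `A_n(K)`-module is strongly generalized Eulerian if there is a single `a > 0`
such that `(E_n - |w|)^a • w = 0` for every homogeneous `w`. -/
def IsStronglyGeneralizedEulerian (M : Type) [AddCommGroup M] [Module (WeylAlgebra K n) M]
    (g : ℤ → AddSubgroup M) : Prop :=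
  ∃ a : ℕ, 0 < a ∧ ∀ (j : ℤ), ∀ m ∈ g j,
    ((euler K n - (j : WeylAlgebra K n)) ^ a) • m = 0

/-- A graded `A_n(K)`-module is generalized Eulerian if for every homogeneous `w` there is
some `a > 0` (depending on `w`) with `(E_n - |w|)^a • w = 0`. -/
def IsGeneralizedEulerian (M : Type) [AddCommGroup M] [Module (WeylAlgebra K n) M]
    (g : ℤ → AddSubgroup M) : Prop :=
  ∀ (j : ℤ), ∀ m ∈ g j, ∃ a : ℕ, 0 < a ∧
    ((euler K n - (j : WeylAlgebra K n)) ^ a) • m = 0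

section AlgebraModule

variable {K} {A V : Type*} [Ring A] [Algebra K A] [AddCommGroup V] [Module A V] (T : A)

open Polynomial in
theorem eq_zero_of_sub_pow_smul_eq_zero_of_ne {b b' : K} (hb : b ≠ b') {a a' : ℕ} {y : V}
    (h : (T - algebraMap K A b) ^ a • y = 0) (h' : (T - algebraMap K A b') ^ a' • y = 0) :
    y = 0 := by
  obtain ⟨u, v, huv⟩ : IsCoprime ((X - C b) ^ a) ((X - C b') ^ a') :=
    (isCoprime_X_sub_C_of_isUnit_sub (sub_ne_zero_of_ne hb).isUnit).pow
  have := congrArg (fun p => aeval T p • y) huv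
  simp only [map_add, map_mul, map_pow, map_sub, aeval_X, aeval_C, add_smul, mul_smul, map_one,
    one_smul, h, h', smul_zero, add_zero] at this
  exact this.symm

theorem eq_of_sub_pow_smul_eq_zero (a : ℕ) {G : AddSubgroup V}
    (hG : ∀ y ∈ G, ∃ c : K, (T - algebraMap K A c) ^ a • y = 0) {v w : V} (hv : v ∈ G)
    (hw : w ∈ G) (hv0 : v ≠ 0) (hw0 : w ≠ 0) {b b' : K}
    (h : (T - algebraMap K A b) ^ a • v = 0) (h' : (T - algebraMap K A b') ^ a • w = 0) :
    b = b' := by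
  by_contra hbb
  obtain ⟨c, hc⟩ := hG (v + w) (add_mem hv hw)
  have hcomm : ∀ d e : K, ∀ x : V,
      (T - algebraMap K A d) ^ a • (T - algebraMap K A e) ^ a • x
        = (T - algebraMap K A e) ^ a • (T - algebraMap K A d) ^ a • x := fun d e x => by
    have : Commute (T - algebraMap K A d) (T - algebraMap K A e) :=
      ((Commute.refl T).sub_right (Algebra.commute_algebraMap_right e T)).sub_left
        ((Algebra.commute_algebraMap_left d T).sub_right (Algebra.commute_algebraMap_left d _))
    rw [← mul_smul, ← mul_smul, (this.pow_pow a a).eq]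
  -- `(T - c)^a v = -(T - c)^a w` is killed by both `(T - b)^a` and `(T - b')^a`
  have hcv : (T - algebraMap K A c) ^ a • v = 0 := by
    rw [smul_add, add_eq_zero_iff_eq_neg] at hc
    refine eq_zero_of_sub_pow_smul_eq_zero_of_ne T hbb (a := a) (a' := a) ?_ ?_
    · rw [hcomm, h, smul_zero]
    · rw [hc, smul_neg, hcomm, h', smul_zero, neg_zero]
  have hcw : (T - algebraMap K A c) ^ a • w = 0 := by
    rwa [smul_add, hcv, zero_add] at hc
  rcases eq_or_ne c b with rfl | hcb
  · exact hw0 (eq_zero_of_sub_pow_smul_eq_zero_of_ne T hbb hcw h')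
  · exact hv0 (eq_zero_of_sub_pow_smul_eq_zero_of_ne T hcb hcv h)

theorem exists_map_eq_of_algebraMap_pow_smul_eq {M : Type*} [AddCommGroup M] [Module A M]
    {c : K} (hinj : Function.Injective (algebraMap K A c • · : V → V)) (φ : M →ₗ[A] V)
    {k : ℕ} {y : V} {z : M} (h : algebraMap K A c ^ k • y = φ z) : ∃ z', φ z' = y := by
  rcases eq_or_ne c 0 with rfl | hc
  · exact ⟨0, hinj (by simp)⟩
  · refine ⟨algebraMap K A (c ^ k)⁻¹ • z, ?_⟩
    rw [map_smul, ← h, ← mul_smul, ← map_pow, ← map_mul,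
      inv_mul_cancel₀ (pow_ne_zero k hc), map_one, one_smul]

end AlgebraModule

section Decomposition

variable {ι M N : Type*} [DecidableEq ι] [AddCommGroup M] [AddCommGroup N]

theorem DirectSum.IsInternal.exists_mem_map_eq {F : Type*} [FunLike F M N]
    [AddMonoidHomClass F M N] {𝓜 : ι → AddSubgroup M} {𝓝 : ι → AddSubgroup N}
    (h𝓜 : DirectSum.IsInternal 𝓜) (h𝓝 : DirectSum.IsInternal 𝓝) (φ : F)
    (hφ : ∀ i, ∀ m ∈ 𝓜 i, φ m ∈ 𝓝 i) (m : M) {j : ι} (hj : φ m ∈ 𝓝 j) :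
    ∃ m' ∈ 𝓜 j, φ m' = φ m := by
  let := h𝓜.chooseDecomposition
  let := h𝓝.chooseDecomposition
  have key : ∀ x : M,
      (DirectSum.decompose 𝓝 (φ x) j : N) = φ (DirectSum.decompose 𝓜 x j) := by
    refine DirectSum.Decomposition.inductionOn 𝓜 (by simp) (fun {i} x => ?_)
      (fun x y hx hy => ?_)
    · rcases eq_or_ne i j with rfl | hij
      · rw [DirectSum.decompose_of_mem_same _ (hφ i x x.2),
          DirectSum.decompose_of_mem_same _ x.2]
      · rw [DirectSum.decompose_of_mem_ne _ (hφ i x x.2) hij,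
          DirectSum.decompose_of_mem_ne _ x.2 hij, map_zero]
    · simp only [map_add, DirectSum.decompose_add, DirectSum.add_apply, AddSubgroup.coe_add,
        hx, hy]
  exact ⟨_, (DirectSum.decompose 𝓜 m j).2,
    by rw [← key, DirectSum.decompose_of_mem_same _ hj]⟩

end Decomposition

namespace WeylAlgebra

variable {K n}

theorem Wx_mul_Wx (i j : Fin n) : Wx K n i * Wx K n j = Wx K n j * Wx K n i := by
  simp only [Wx, ← map_mul]
  exact RingQuot.mkAlgHom_rel K (WeylRel.xx i j)

theorem Wd_mul_Wx_of_ne {i j : Fin n} (h : i ≠ j) :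
    Wd K n i * Wx K n j = Wx K n j * Wd K n i := by
  simp only [Wx, Wd, ← map_mul]
  exact RingQuot.mkAlgHom_rel K (WeylRel.dx_ne i j h)

theorem Wd_mul_Wx_self (i : Fin n) : Wd K n i * Wx K n i = 1 + Wx K n i * Wd K n i := by
  simp only [Wx, Wd, ← map_mul]
  rw [RingQuot.mkAlgHom_rel K (WeylRel.dx i), map_add, map_one]

theorem euler_mul_Wx (i : Fin n) : euler K n * Wx K n i = Wx K n i * (euler K n + 1) := by
  have summand : ∀ l, Wx K n l * Wd K n l * Wx K n i
      = Wx K n i * (Wx K n l * Wd K n l) + if l = i then Wx K n i else 0 := by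
    intro l
    rcases eq_or_ne l i with rfl | h
    · rw [mul_assoc, Wd_mul_Wx_self, if_pos rfl]
      noncomm_ring
    · rw [if_neg h, add_zero, mul_assoc, Wd_mul_Wx_of_ne h, ← mul_assoc, Wx_mul_Wx, mul_assoc]
  simp only [euler, Finset.sum_mul, summand, Finset.sum_add_distrib, ← Finset.mul_sum,
    Finset.sum_ite_eq', Finset.mem_univ, if_true, mul_add, mul_one]

-- `[E_n, p] = d p`; in `A_n(K)` these are exactly the homogeneous elements of degree `d`.
def IsHomogeneous (p : WeylAlgebra K n) (d : ℤ) : Prop :=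
  euler K n * p = p * (euler K n + d)

theorem isHomogeneous_Wx (i : Fin n) : IsHomogeneous (Wx K n i) 1 := by
  simpa [IsHomogeneous] using euler_mul_Wx i

namespace IsHomogeneous

theorem one : IsHomogeneous (1 : WeylAlgebra K n) 0 := by
  simp [IsHomogeneous]

theorem mul {p q : WeylAlgebra K n} {d e : ℤ} (hp : IsHomogeneous p d)
    (hq : IsHomogeneous q e) : IsHomogeneous (p * q) (d + e) := by
  unfold IsHomogeneous at *
  rw [← mul_assoc, hp, mul_assoc, add_mul, hq, Int.cast_comm d q]
  push_cast
  noncomm_ring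

theorem pow {p : WeylAlgebra K n} {d : ℤ} (hp : IsHomogeneous p d) (k : ℕ) :
    IsHomogeneous (p ^ k) (k * d) := by
  induction k with
  | zero => simpa using one
  | succ k ih => simpa [pow_succ, add_mul] using ih.mul hp

theorem smul {p : WeylAlgebra K n} {d : ℤ} (hp : IsHomogeneous p d) (c : K) :
    IsHomogeneous (c • p) d := by
  unfold IsHomogeneous at *
  rw [mul_smul_comm, hp, smul_mul_assoc]

theorem sum {α : Type*} {s : Finset α} {p : α → WeylAlgebra K n} {d : ℤ}
    (hp : ∀ a ∈ s, IsHomogeneous (p a) d) : IsHomogeneous (∑ a ∈ s, p a) d := by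
  unfold IsHomogeneous at *
  rw [Finset.mul_sum, Finset.sum_mul]
  exact Finset.sum_congr rfl hp

theorem list_prod {α : Type*} (L : List α) {p : α → WeylAlgebra K n} {d : α → ℤ}
    (hp : ∀ a, IsHomogeneous (p a) (d a)) : IsHomogeneous (L.map p).prod (L.map d).sum := by
  induction L with
  | nil => simpa using one
  | cons a L ih => simpa using (hp a).mul ih

theorem sub_pow_mul {p : WeylAlgebra K n} {d : ℤ} (hp : IsHomogeneous p d) (b : ℤ) (a : ℕ) :
    (euler K n - ((b + d : ℤ) : WeylAlgebra K n)) ^ a * p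
      = p * (euler K n - (b : WeylAlgebra K n)) ^ a := by
  induction a with
  | zero => simp
  | succ a ih =>
    have step : (euler K n - ((b + d : ℤ) : WeylAlgebra K n)) * p
        = p * (euler K n - (b : WeylAlgebra K n)) := by
      rw [sub_mul, hp, Int.cast_comm]
      push_cast
      rw [mul_add, mul_add, mul_sub]
      abel
    rw [pow_succ, mul_assoc, step, ← mul_assoc, ih, pow_succ, mul_assoc]

end IsHomogeneous

theorem isHomogeneous_Wmonomial (γ : Fin n → ℕ) :
    IsHomogeneous (Wmonomial K n γ fun _ => 0) (∑ i, γ i : ℕ) := by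
  have h := IsHomogeneous.list_prod (List.finRange n) (p := fun i => Wx K n i ^ γ i)
    (d := fun i => (γ i : ℤ)) fun i => by simpa using (isHomogeneous_Wx i).pow (γ i)
  rw [← List.ofFn_eq_map, ← List.ofFn_eq_map, List.sum_ofFn] at h
  simpa [Wmonomial] using h

section Module

variable {M : Type*} [AddCommGroup M] [Module (WeylAlgebra K n) M]

variable (K n) in
def IsEulerGenEigen (a : ℕ) (b : ℤ) (y : M) : Prop :=
  (euler K n - (b : WeylAlgebra K n)) ^ a • y = 0

theorem isEulerGenEigen_iff {a : ℕ} {b : ℤ} {y : M} :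
    IsEulerGenEigen K n a b y
      ↔ (euler K n - algebraMap K (WeylAlgebra K n) b) ^ a • y = 0 := by
  rw [IsEulerGenEigen, map_intCast]

theorem IsHomogeneous.isEulerGenEigen_smul {p : WeylAlgebra K n} {d : ℤ}
    (hp : IsHomogeneous p d) {a : ℕ} {b : ℤ} {y : M} (hy : IsEulerGenEigen K n a b y) :
    IsEulerGenEigen K n a (b + d) (p • y) := by
  rw [IsEulerGenEigen, ← mul_smul, hp.sub_pow_mul, mul_smul, hy, smul_zero]

theorem IsHomogeneous.isEulerGenEigen_of_smul {p : WeylAlgebra K n} {d : ℤ}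
    (hp : IsHomogeneous p d) (hinj : Function.Injective (p • · : M → M)) {a : ℕ} {b : ℤ}
    {y : M} (hy : IsEulerGenEigen K n a (b + d) (p • y)) : IsEulerGenEigen K n a b y :=
  hinj <| by
    simp only [IsEulerGenEigen, ← mul_smul, ← hp.sub_pow_mul, smul_zero] at hy ⊢
    exact hy

theorem eq_of_isEulerGenEigen [CharZero K] {a : ℕ} {G : AddSubgroup M}
    (hG : ∀ y ∈ G, ∃ b, IsEulerGenEigen K n a b y) {v w : M} (hv : v ∈ G) (hw : w ∈ G)
    (hv0 : v ≠ 0) (hw0 : w ≠ 0) {b b' : ℤ} (h : IsEulerGenEigen K n a b v)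
    (h' : IsEulerGenEigen K n a b' w) : b = b' := by
  have hG' : ∀ y ∈ G, ∃ c : K, (euler K n - algebraMap K _ c) ^ a • y = 0 := fun y hy =>
    let ⟨b, hb⟩ := hG y hy; ⟨b, isEulerGenEigen_iff.1 hb⟩
  exact_mod_cast eq_of_sub_pow_smul_eq_zero (euler K n) a hG' hv hw hv0 hw0
    (isEulerGenEigen_iff.1 h) (isEulerGenEigen_iff.1 h')

theorem Wmonomial_smul_eq_zero {w : M} (hw : ∀ l, Wx K n l • w = 0) {γ : Fin n → ℕ}
    (hγ : γ ≠ 0) : (Wmonomial K n γ fun _ => 0) • w = 0 := by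
  suffices ∀ L : List (Fin n), (∃ i ∈ L, γ i ≠ 0) →
      (L.map fun i => Wx K n i ^ γ i).prod • w = 0 by
    obtain ⟨i, hi⟩ := Function.ne_iff.1 hγ
    simpa [Wmonomial, List.ofFn_eq_map] using this _ ⟨i, List.mem_finRange i, hi⟩
  intro L hL
  induction L with
  | nil => simp at hL
  | cons i L ih =>
    rw [List.map_cons, List.prod_cons, mul_smul]
    by_cases hL' : ∃ i ∈ L, γ i ≠ 0
    · rw [ih hL', smul_zero]
    · have hi : γ i ≠ 0 := ((List.exists_mem_cons_iff _ _ _).1 hL).resolve_right hL'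
      push Not at hL'
      obtain ⟨m, hm⟩ := Nat.exists_eq_succ_of_ne_zero hi
      rw [List.prod_eq_one (by simpa using fun j hj => by simp [hL' j hj]), one_smul, hm,
        pow_succ, mul_smul, hw, smul_zero]

theorem exists_isEulerGenEigen_of_le {g : ℤ → AddSubgroup M}
    (hX : ∀ (l : Fin n) (t : ℤ), ∀ m ∈ g t, Wx K n l • m ∈ g (t + 1))
    (hsocle : ∀ w : M, (∀ l, Wx K n l • w = 0) → w = 0) {a : ℕ} {b t : ℤ} {w : M}
    (hw : w ∈ g t) (hw0 : w ≠ 0) (hwb : IsEulerGenEigen K n a b w)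
    {t' : ℤ} (ht : t ≤ t') :
    ∃ w' ∈ g t', w' ≠ 0 ∧ IsEulerGenEigen K n a (b + (t' - t)) w' := by
  induction t', ht using Int.leInduction with
  | base => exact ⟨w, hw, hw0, by simpa using hwb⟩
  | succ t' _ ih =>
    obtain ⟨w', hw', hw'0, hw'b⟩ := ih
    obtain ⟨l, hl⟩ : ∃ l, Wx K n l • w' ≠ 0 := by
      by_contra! h
      exact hw'0 (hsocle w' h)
    refine ⟨_, hX l t' w' hw', hl, ?_⟩
    have := (isHomogeneous_Wx l).isEulerGenEigen_smul hw'b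
    rwa [show b + (t' - t) + 1 = b + (t' + 1 - t) by ring] at this

theorem eq_degree_of_isEulerGenEigen [CharZero K] {g : ℤ → AddSubgroup M}
    (hX : ∀ (l : Fin n) (t : ℤ), ∀ m ∈ g t, Wx K n l • m ∈ g (t + 1))
    (hsocle : ∀ w : M, (∀ l, Wx K n l • w = 0) → w = 0) {a : ℕ}
    (hindex : ∀ t, ∀ y ∈ g t, ∃ b, IsEulerGenEigen K n a b y) {i : ℤ} {w : M}
    (hw : w ∈ g i) (hw0 : w ≠ 0) (hwi : IsEulerGenEigen K n a i w) {j b : ℤ} {y : M}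
    (hy : y ∈ g j) (hy0 : y ≠ 0) (hyb : IsEulerGenEigen K n a b y) : b = j := by
  obtain ⟨y', hy', hy'0, hy'b⟩ :=
    exists_isEulerGenEigen_of_le hX hsocle hy hy0 hyb (le_max_right i j)
  obtain ⟨w', hw', hw'0, hw'b⟩ :=
    exists_isEulerGenEigen_of_le hX hsocle hw hw0 hwi (le_max_left i j)
  have := eq_of_isEulerGenEigen (hindex _) hy' hw' hy'0 hw'0 hy'b hw'b
  omega

end Module

section HomogeneousPolynomial

variable {S : Finset (Fin n → ℕ)} {c : (Fin n → ℕ) → K} {d : ℕ}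

theorem isHomogeneous_sum_smul_Wmonomial (hhom : ∀ γ ∈ S, ∑ i, γ i = d) :
    IsHomogeneous (∑ γ ∈ S, c γ • Wmonomial K n γ fun _ => 0) d :=
  IsHomogeneous.sum fun γ hγ => hhom γ hγ ▸ (isHomogeneous_Wmonomial γ).smul (c γ)

theorem sum_smul_Wmonomial_eq_algebraMap (hhom : ∀ γ ∈ S, ∑ i, γ i = 0) :
    ∑ γ ∈ S, c γ • Wmonomial K n γ (fun _ => 0) = algebraMap K _ (∑ γ ∈ S, c γ) := by
  rw [map_sum]
  refine Finset.sum_congr rfl fun γ hγ => ?_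
  obtain rfl : γ = 0 :=
    funext fun i => Finset.sum_eq_zero_iff.1 (hhom γ hγ) i (Finset.mem_univ i)
  simp [Wmonomial, Algebra.algebraMap_eq_smul_one]

theorem eq_zero_of_forall_Wx_smul_eq_zero {M : Type*} [AddCommGroup M]
    [Module (WeylAlgebra K n) M] (hd : d ≠ 0) (hhom : ∀ γ ∈ S, ∑ i, γ i = d)
    {f : WeylAlgebra K n} (hf : f = ∑ γ ∈ S, c γ • Wmonomial K n γ fun _ => 0)
    (hinj : Function.Injective (f • · : M → M)) (w : M) (hw : ∀ l, Wx K n l • w = 0) :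
    w = 0 :=
  hinj <| by
    simp only [hf, Finset.sum_smul, smul_zero]
    refine Finset.sum_eq_zero fun γ hγ => ?_
    have hγ0 : γ ≠ 0 := fun h => hd (by simp [← hhom γ hγ, h])
    rw [Algebra.smul_def, mul_smul, Wmonomial_smul_eq_zero hw hγ0, smul_zero]

end HomogeneousPolynomial

end WeylAlgebra

open WeylAlgebra

/-- `M_f` is modelled by `Mf` with a degree-preserving `A_n(K)`-linear `ι : M → Mf` such that
`f` acts bijectively on `Mf` and every homogeneous element of `Mf` is some `(ι z) / f^k`. -/
theorem localization_sge [CharZero K]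
    (M Mf : Type) [AddCommGroup M] [AddCommGroup Mf]
    [Module (WeylAlgebra K n) M] [Module (WeylAlgebra K n) Mf]
    (gM : ℤ → AddSubgroup M) (gMf : ℤ → AddSubgroup Mf)
    (hM : IsGradedWeylModule K n M gM) (hMf : IsGradedWeylModule K n Mf gMf)
    (S : Finset (Fin n → ℕ)) (c : (Fin n → ℕ) → K) (df : ℕ)
    (hhom : ∀ γ ∈ S, ∑ i : Fin n, γ i = df)
    (f : WeylAlgebra K n) (hf : f = ∑ γ ∈ S, c γ • Wmonomial K n γ (fun _ => 0))
    (ι : M →ₗ[WeylAlgebra K n] Mf) (hιgr : ∀ (j : ℤ), ∀ m ∈ gM j, ι m ∈ gMf j)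
    (hfbij : Function.Bijective fun y : Mf => f • y)
    (hloc : ∀ (j : ℤ), ∀ y ∈ gMf j, ∃ (k : ℕ) (i : ℤ) (z : M),
      z ∈ gM i ∧ f ^ k • y = ι z)
    (hsge : IsStronglyGeneralizedEulerian K n M gM) :
    IsStronglyGeneralizedEulerian K n Mf gMf := by
  obtain ⟨a, ha, hMa⟩ := hsge
  refine ⟨a, ha, fun j y hy => ?_⟩
  have hfinj : ∀ k : ℕ, Function.Injective (f ^ k • · : Mf → Mf) := fun k =>
    smul_iterate (α := Mf) f k ▸ hfbij.1.iterate k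
  have hιM : ∀ i, ∀ z ∈ gM i, IsEulerGenEigen K n a i (ι z) := fun i z hz => by
    rw [IsEulerGenEigen, ← map_smul, hMa i z hz, map_zero]
  obtain ⟨k, i, z, hz, hyz⟩ := hloc j y hy
  rcases eq_or_ne df 0 with rfl | hdf
  · rw [hf, sum_smul_Wmonomial_eq_algebraMap hhom] at hfbij hyz
    obtain ⟨z, rfl⟩ := exists_map_eq_of_algebraMap_pow_smul_eq hfbij.1 ι hyz
    obtain ⟨z', hz', hz'z⟩ := hM.1.exists_mem_map_eq hMf.1 ι hιgr z hy
    exact hz'z ▸ hιM j z' hz'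
  · have hfd : IsHomogeneous f df := hf ▸ isHomogeneous_sum_smul_Wmonomial hhom
    have hindex : ∀ t, ∀ y ∈ gMf t, ∃ b, IsEulerGenEigen K n a b y := fun t y hy =>
      let ⟨k, i, z, hz, hyz⟩ := hloc t y hy
      ⟨i - k * df, (hfd.pow k).isEulerGenEigen_of_smul (hfinj k)
        (by rw [sub_add_cancel, hyz]; exact hιM i z hz)⟩
    rcases eq_or_ne y 0 with rfl | hy0
    · exact smul_zero _
    obtain ⟨b, hb⟩ := hindex j y hy
    rwa [eq_degree_of_isEulerGenEigen hMf.2.1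
      (eq_zero_of_forall_Wx_smul_eq_zero hdf hhom hf hfbij.1) hindex (hιgr i z hz)
      (by simpa [← hyz] using (hfinj k).ne hy0) (hιM i z hz) hy hy0 hb] at hb
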